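/- arXiv:1611.06782 — 2 statements merged into one kernel-verified Lean document; each statement's English description precedes it below -/
import Mathlib

section
/- Let α > 0, and for x ∈ ℝ set h₊(x) = e^{√(2α) x} and h₋(x) = e^{-√(2α) x}. Suppose c₊ ∈ L²(ℝ, h₊² dx) and define c₋(x) = c₊(x) h₊(x)² - 2√(2α) ∫_{-∞}^x c₊(z) h₊(z)² dz. Then c₋ ∈ L²(ℝ, h₋² dx), with ‖c₋ h₋‖_{L²} ≤ 3 ‖c₊ h₊‖_{L²}. -/
/-!
With `β = √(2α)` and `f = c₊ h₊`, the substitution `h₊(z) = e^{βz}` turns the definition of `c₋`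
into `c₋ h₋ = f - 2 (ρ_β ⋆ f)`, where `ρ_β(t) = β e^{-βt} 1_{t ≥ 0}` is the density of the
exponential distribution. Since `‖ρ_β‖₁ = 1`, Young's inequality `‖k ⋆ f‖₂ ≤ ‖k‖₁ ‖f‖₂` gives
`‖ρ_β ⋆ f‖₂ ≤ ‖f‖₂`, and the triangle inequality gives the constant `1 + 2 = 3`.
-/

open MeasureTheory Set ProbabilityTheory
open scoped ENNReal Convolution

theorem ENNReal.sq_lintegral_mul_le {α : Type*} [MeasurableSpace α] {μ : Measure α}
    {w F : α → ℝ≥0∞} (hw : AEMeasurable w μ) (hF : AEMeasurable F μ) :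
    (∫⁻ a, w a * F a ∂μ) ^ 2 ≤ (∫⁻ a, w a ∂μ) * ∫⁻ a, w a * F a ^ 2 ∂μ := by
  have hsplit : ∀ a, w a * F a = w a ^ (2⁻¹ : ℝ) * (w a * F a ^ 2) ^ (2⁻¹ : ℝ) := fun a => by
    rw [← ENNReal.mul_rpow_of_nonneg _ _ (by norm_num),
      show w a * (w a * F a ^ 2) = (w a * F a) ^ 2 by ring]
    exact_mod_cast (ENNReal.pow_rpow_inv_natCast two_ne_zero (w a * F a)).symm
  have holder := ENNReal.lintegral_mul_norm_pow_le hw (hw.mul (hF.pow_const 2))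
    (p := 2⁻¹) (q := 2⁻¹) (by norm_num) (by norm_num) (by norm_num)
  calc (∫⁻ a, w a * F a ∂μ) ^ 2
      ≤ ((∫⁻ a, w a ∂μ) ^ (2⁻¹ : ℝ) * (∫⁻ a, w a * F a ^ 2 ∂μ) ^ (2⁻¹ : ℝ)) ^ 2 := by
        rw [lintegral_congr hsplit]; gcongr; exact holder
    _ = (∫⁻ a, w a ∂μ) * ∫⁻ a, w a * F a ^ 2 ∂μ := by
        rw [← ENNReal.mul_rpow_of_nonneg _ _ (by norm_num), ← ENNReal.rpow_two,
          ← ENNReal.rpow_mul]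
        norm_num

namespace MeasureTheory

theorem eLpNorm_two_sq_eq_lintegral {α E : Type*} [MeasurableSpace α] [NormedAddCommGroup E]
    {ν : Measure α} (u : α → E) : eLpNorm u 2 ν ^ 2 = ∫⁻ x, ‖u x‖ₑ ^ 2 ∂ν := by
  simpa [ENNReal.rpow_two] using eLpNorm_nnreal_pow_eq_lintegral (f := u) (μ := ν) (p := 2)
    two_ne_zero

theorem sqrt_integral_sq_eq_toReal_eLpNorm {α : Type*} [MeasurableSpace α] {μ : Measure α}
    {u : α → ℝ} (hu : MemLp u 2 μ) : √(∫ x, u x ^ 2 ∂μ) = (eLpNorm u 2 μ).toReal := by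
  rw [hu.eLpNorm_eq_integral_rpow_norm two_ne_zero ENNReal.ofNat_ne_top,
    ENNReal.toReal_ofReal (by positivity), Real.sqrt_eq_rpow]
  simp

theorem sqrt_integral_sq_sub_mul_le {α : Type*} [MeasurableSpace α] {μ : Measure α}
    {f g : α → ℝ} (hf : MemLp f 2 μ) (hg : MemLp g 2 μ) (hgf : eLpNorm g 2 μ ≤ eLpNorm f 2 μ)
    (c : ℝ) : √(∫ x, (f x - c * g x) ^ 2 ∂μ) ≤ (1 + |c|) * √(∫ x, f x ^ 2 ∂μ) := by
  have hsub := sqrt_integral_sq_eq_toReal_eLpNorm (hf.sub (hg.const_smul c))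
  simp only [Pi.sub_apply, Pi.smul_apply, smul_eq_mul] at hsub
  have hnorm : eLpNorm (f - c • g) 2 μ ≤ ENNReal.ofReal (1 + |c|) * eLpNorm f 2 μ :=
    calc eLpNorm (f - c • g) 2 μ ≤ eLpNorm f 2 μ + ‖c‖ₑ * eLpNorm g 2 μ := by
          rw [← eLpNorm_const_smul]; exact eLpNorm_sub_le hf.1 (hg.1.const_smul c) one_le_two
      _ ≤ ENNReal.ofReal (1 + |c|) * eLpNorm f 2 μ := by
          rw [ENNReal.ofReal_add zero_le_one (abs_nonneg c), add_mul, ENNReal.ofReal_one, one_mul,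
            ← Real.enorm_eq_ofReal_abs]
          gcongr
  rw [hsub, sqrt_integral_sq_eq_toReal_eLpNorm hf]
  simpa [ENNReal.toReal_mul, abs_nonneg, add_nonneg] using
    ENNReal.toReal_mono (ENNReal.mul_ne_top ENNReal.ofReal_ne_top hf.2.ne) hnorm

section Young

variable {G : Type*} [MeasurableSpace G] [AddGroup G] [MeasurableAdd₂ G] [MeasurableNeg G]
  {μ : Measure G} [SFinite μ] [μ.IsAddRightInvariant]

/-- Schur test: Cauchy–Schwarz against the weight `k`, then Tonelli and invariance of `μ`. -/
theorem lintegral_sq_lintegral_mul_sub_le {k F : G → ℝ≥0∞} (hk : AEMeasurable k μ)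
    (hF : AEMeasurable F μ) :
    ∫⁻ x, (∫⁻ t, k t * F (x - t) ∂μ) ^ 2 ∂μ ≤ (∫⁻ t, k t ∂μ) ^ 2 * ∫⁻ x, F x ^ 2 ∂μ := by
  have hjoint : AEMeasurable (fun p : G × G => k p.2 * F (p.1 - p.2) ^ 2) (μ.prod μ) :=
    hk.comp_snd.mul ((hF.comp_quasiMeasurePreserving
      (quasiMeasurePreserving_sub_of_right_invariant μ μ)).pow_const 2)
  calc ∫⁻ x, (∫⁻ t, k t * F (x - t) ∂μ) ^ 2 ∂μ
      ≤ ∫⁻ x, (∫⁻ t, k t ∂μ) * ∫⁻ t, k t * F (x - t) ^ 2 ∂μ ∂μ :=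
        lintegral_mono fun x => ENNReal.sq_lintegral_mul_le hk
          (hF.comp_quasiMeasurePreserving (quasiMeasurePreserving_sub_left_of_right_invariant μ x))
    _ = (∫⁻ t, k t ∂μ) * ∫⁻ t, ∫⁻ x, k t * F (x - t) ^ 2 ∂μ ∂μ := by
        rw [lintegral_const_mul'' _ hjoint.lintegral_prod_right',
          lintegral_lintegral_swap hjoint]
    _ = (∫⁻ t, k t ∂μ) * ∫⁻ t, k t * ∫⁻ x, F x ^ 2 ∂μ ∂μ := by
        congr 1
        refine lintegral_congr fun t => ?_
        rw [lintegral_sub_right_eq_self (fun y => k t * F y ^ 2) t,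
          lintegral_const_mul'' _ (hF.pow_const 2)]
    _ = (∫⁻ t, k t ∂μ) ^ 2 * ∫⁻ x, F x ^ 2 ∂μ := by
        rw [lintegral_mul_const'' _ hk]; ring

variable {𝕜 E E' F : Type*} [NontriviallyNormedField 𝕜]
  [NormedAddCommGroup E] [NormedSpace 𝕜 E] [NormedAddCommGroup E'] [NormedSpace 𝕜 E']
  [NormedAddCommGroup F] [NormedSpace 𝕜 F] [NormedSpace ℝ F]
  {f : G → E} {g : G → E'} (L : E →L[𝕜] E' →L[𝕜] F)

theorem AEStronglyMeasurable.convolution (hf : AEStronglyMeasurable f μ)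
    (hg : AEStronglyMeasurable g μ) : AEStronglyMeasurable (f ⋆[L, μ] g) μ :=
  (hf.convolution_integrand L hg).integral_prod_right'

theorem eLpNorm_convolution_le (hf : AEStronglyMeasurable f μ) (hg : AEStronglyMeasurable g μ) :
    eLpNorm (f ⋆[L, μ] g) 2 μ ≤ ‖L‖ₑ * eLpNorm f 1 μ * eLpNorm g 2 μ := by
  have hpointwise : ∀ x, ‖(f ⋆[L, μ] g) x‖ₑ ≤ ‖L‖ₑ * ∫⁻ t, ‖f t‖ₑ * ‖g (x - t)‖ₑ ∂μ := by
    intro x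
    rw [convolution_def, ← lintegral_const_mul' _ _ enorm_ne_top]
    refine (enorm_integral_le_lintegral_enorm _).trans (lintegral_mono fun t => ?_)
    rw [← mul_assoc]
    exact L.le_opENorm₂ _ _
  rw [← ENNReal.pow_le_pow_left_iff two_ne_zero]
  calc eLpNorm (f ⋆[L, μ] g) 2 μ ^ 2
      ≤ ∫⁻ x, (‖L‖ₑ * ∫⁻ t, ‖f t‖ₑ * ‖g (x - t)‖ₑ ∂μ) ^ 2 ∂μ := by
        rw [eLpNorm_two_sq_eq_lintegral]; gcongr with x; exact hpointwise x
    _ = ‖L‖ₑ ^ 2 * ∫⁻ x, (∫⁻ t, ‖f t‖ₑ * ‖g (x - t)‖ₑ ∂μ) ^ 2 ∂μ := by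
        simp_rw [mul_pow]; exact lintegral_const_mul' _ _ (by simp)
    _ ≤ ‖L‖ₑ ^ 2 * ((∫⁻ t, ‖f t‖ₑ ∂μ) ^ 2 * ∫⁻ x, ‖g x‖ₑ ^ 2 ∂μ) := by
        gcongr; exact lintegral_sq_lintegral_mul_sub_le hf.enorm hg.enorm
    _ = (‖L‖ₑ * eLpNorm f 1 μ * eLpNorm g 2 μ) ^ 2 := by
        rw [eLpNorm_one_eq_lintegral_enorm, mul_pow, mul_pow, eLpNorm_two_sq_eq_lintegral]; ring

theorem MemLp.convolution (hf : MemLp f 1 μ) (hg : MemLp g 2 μ) : MemLp (f ⋆[L, μ] g) 2 μ :=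
  ⟨hf.1.convolution L hg.1, (eLpNorm_convolution_le L hf.1 hg.1).trans_lt
    (ENNReal.mul_lt_top (ENNReal.mul_lt_top enorm_lt_top hf.2) hg.2)⟩

end Young

end MeasureTheory

section ExponentialKernel

variable {r : ℝ}

theorem exponentialPDFReal_convolution_apply (f : ℝ → ℝ) (x : ℝ) :
    (exponentialPDFReal r ⋆ f) x =
      r * Real.exp (-(r * x)) * ∫ z in Iic x, f z * Real.exp (r * z) := by
  rw [convolution_lsmul, ← integral_sub_left_eq_self _ volume x, ← integral_const_mul,
    ← integral_indicator measurableSet_Iic]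
  refine integral_congr_ae (Filter.Eventually.of_forall fun z => ?_)
  by_cases hz : z ≤ x
  · simp only [exponentialPDFReal, gammaPDFReal, sub_nonneg, hz, ↓reduceIte, Real.rpow_one,
      Real.Gamma_one, div_one, sub_self, Real.rpow_zero, mul_one, sub_sub_cancel, smul_eq_mul,
      mem_Iic, indicator_of_mem]
    rw [show -(r * (x - z)) = -(r * x) + r * z by ring, Real.exp_add]
    ring
  · simp [exponentialPDFReal, gammaPDFReal, hz]

theorem eLpNorm_one_exponentialPDFReal (hr : 0 < r) :
    eLpNorm (exponentialPDFReal r) 1 volume = 1 := by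
  rw [eLpNorm_one_eq_lintegral_enorm, ← lintegral_exponentialPDF_eq_one hr]
  exact lintegral_congr fun x => Real.enorm_of_nonneg (exponentialPDFReal_nonneg hr x)

theorem memLp_one_exponentialPDFReal (hr : 0 < r) : MemLp (exponentialPDFReal r) 1 volume :=
  ⟨(stronglyMeasurable_exponentialPDFReal r).aestronglyMeasurable,
    by simp [eLpNorm_one_exponentialPDFReal hr]⟩

theorem eLpNorm_exponentialPDFReal_convolution_le (hr : 0 < r) {f : ℝ → ℝ}
    (hf : AEStronglyMeasurable f volume) :
    eLpNorm (exponentialPDFReal r ⋆ f) 2 volume ≤ eLpNorm f 2 volume := by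
  simpa [eLpNorm_one_exponentialPDFReal hr] using
    eLpNorm_convolution_le (ContinuousLinearMap.lsmul ℝ ℝ)
      (memLp_one_exponentialPDFReal hr).1 hf

end ExponentialKernel

theorem stmt_5 (α : ℝ) (hα : 0 < α)
    (hp hm : ℝ → ℝ)
    (hhp : ∀ x, hp x = Real.exp (Real.sqrt (2*α) * x))
    (hhm : ∀ x, hm x = Real.exp (-(Real.sqrt (2*α)) * x))
    (cp : ℝ → ℝ) (hcp : MemLp (fun x => cp x * hp x) 2 (volume : Measure ℝ))
    (cm : ℝ → ℝ)
    (hcm : ∀ x, cm x = cp x * (hp x)^2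
      - 2 * Real.sqrt (2*α) * ∫ z in Iic x, cp z * (hp z)^2) :
    MemLp (fun x => cm x * hm x) 2 (volume : Measure ℝ) ∧
      Real.sqrt (∫ x : ℝ, (cm x * hm x)^2) ≤ 3 * Real.sqrt (∫ x : ℝ, (cp x * hp x)^2) := by
  set β := Real.sqrt (2 * α)
  have hβ : 0 < β := Real.sqrt_pos.2 (by linarith)
  set f := fun x => cp x * hp x
  set g := exponentialPDFReal β ⋆ f
  have hg : MemLp g 2 volume := (memLp_one_exponentialPDFReal hβ).convolution _ hcp
  have hcm_eq : ∀ x, cm x * hm x = f x - 2 * g x := by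
    intro x
    have hint : ∫ z in Iic x, cp z * hp z ^ 2 = ∫ z in Iic x, f z * Real.exp (β * z) := by
      congr with z; simp only [f, hhp]; ring
    have hexp : Real.exp (β * x) * Real.exp (-(β * x)) = 1 := by
      rw [← Real.exp_add, add_neg_cancel, Real.exp_zero]
    rw [hcm, hint, show g x = _ from exponentialPDFReal_convolution_apply f x]
    simp only [f, hhm, hhp, neg_mul]
    linear_combination cp x * Real.exp (β * x) * hexp
  simp only [hcm_eq]
  refine ⟨hcp.sub (hg.const_mul 2), ?_⟩
  convert sqrt_integral_sq_sub_mul_le hcp hg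
    (eLpNorm_exponentialPDFReal_convolution_le hβ hcp.1) 2 using 2
  norm_num
end

section
/- Let α > 0 and a ∈ ℝ, and let f(x) = e^{√(2α)(x-a)} for x < a, f(x) = -e^{√(2α)(a-x)} for x > a. Then for every g ∈ C_c^∞(ℝ), (1/2)∫_{ℝ∖{a}} f'(x) g'(x) dx + α ∫_ℝ f(x) g(x) dx = 0. -/
open MeasureTheory Set Filter Topology

theorem stmt_8 (α a : ℝ) (hα : 0 < α) (f f' : ℝ → ℝ)
    (hf_lt : ∀ x < a, f x = Real.exp (Real.sqrt (2*α) * (x - a)))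
    (hf_gt : ∀ x > a, f x = -Real.exp (Real.sqrt (2*α) * (a - x)))
    (hf'_lt : ∀ x < a, f' x = Real.sqrt (2*α) * Real.exp (Real.sqrt (2*α) * (x - a)))
    (hf'_gt : ∀ x > a, f' x = Real.sqrt (2*α) * Real.exp (Real.sqrt (2*α) * (a - x))) :
    ∀ g : ℝ → ℝ, ContDiff ℝ (⊤ : ℕ∞) g → HasCompactSupport g →
      (1/2) * (∫ x in ({a} : Set ℝ)ᶜ, f' x * deriv g x) + α * ∫ x : ℝ, f x * g x = 0 := by
  intro g hg hgsupp
  set c := Real.sqrt (2*α) with hcdef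
  have hc : 0 < c := Real.sqrt_pos.mpr (by linarith)
  have hc2 : c * c = 2*α := Real.mul_self_sqrt (by linarith)
  have hgd : Differentiable ℝ g := hg.differentiable (by simp)
  have hgc : Continuous g := hg.continuous
  have hg'c : Continuous (deriv g) := hg.continuous_deriv (by simp)
  have hg'supp : HasCompactSupport (deriv g) := hgsupp.deriv
  -- nice functions
  set u : ℝ → ℝ := fun x => Real.exp (c*(x-a)) * g x with hu_def
  set v : ℝ → ℝ := fun x => Real.exp (c*(x-a)) * deriv g x with hv_def
  set u' : ℝ → ℝ := fun x => Real.exp (c*(a-x)) * g x with hu'_def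
  set v' : ℝ → ℝ := fun x => Real.exp (c*(a-x)) * deriv g x with hv'_def
  have hEl : Continuous fun x : ℝ => Real.exp (c*(x-a)) := by continuity
  have hEr : Continuous fun x : ℝ => Real.exp (c*(a-x)) := by continuity
  have hu_int : Integrable u := (hEl.mul hgc).integrable_of_hasCompactSupport
    (show HasCompactSupport ((fun x : ℝ => Real.exp (c*(x-a))) * g) from hgsupp.mul_left)
  have hv_int : Integrable v := (hEl.mul hg'c).integrable_of_hasCompactSupport
    (show HasCompactSupport ((fun x : ℝ => Real.exp (c*(x-a))) * deriv g) from hg'supp.mul_left)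
  have hu'_int : Integrable u' := (hEr.mul hgc).integrable_of_hasCompactSupport
    (show HasCompactSupport ((fun x : ℝ => Real.exp (c*(a-x))) * g) from hgsupp.mul_left)
  have hv'_int : Integrable v' := (hEr.mul hg'c).integrable_of_hasCompactSupport
    (show HasCompactSupport ((fun x : ℝ => Real.exp (c*(a-x))) * deriv g) from hg'supp.mul_left)
  -- eventual vanishing of g at ±∞
  rw [hasCompactSupport_iff_eventuallyEq, Filter.coclosedCompact_eq_cocompact] at hgsupp
  have hg_bot : g =ᶠ[atBot] 0 := hgsupp.filter_mono atBot_le_cocompact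
  have hg_top : g =ᶠ[atTop] 0 := hgsupp.filter_mono atTop_le_cocompact
  -- FTC on the left half-line
  have hFTC_l : ∫ x in Iic a, ((c*c) * u x + c * v x) = c * g a := by
    have hderiv : ∀ x ∈ Iic a, HasDerivAt (fun x => c * Real.exp (c*(x-a)) * g x)
        ((c*c) * u x + c * v x) x := by
      intro x _
      have h1 : HasDerivAt (fun y : ℝ => c*(y-a)) c x := by
        simpa using ((hasDerivAt_id x).sub_const a).const_mul c
      have hE : HasDerivAt (fun x : ℝ => c * Real.exp (c*(x-a)))
          (c * (Real.exp (c*(x-a)) * c)) x := (h1.exp).const_mul c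
      have := hE.mul (hgd x).hasDerivAt
      refine this.congr_deriv ?_
      simp only [hu_def, hv_def]
      ring
    have htend : Tendsto (fun x => c * Real.exp (c*(x-a)) * g x) atBot (𝓝 0) := by
      refine Tendsto.congr' ?_ tendsto_const_nhds
      filter_upwards [hg_bot] with x hx
      simp [hx]
    have hint : IntegrableOn (fun x => (c*c) * u x + c * v x) (Iic a) :=
      ((hu_int.const_mul _).add (hv_int.const_mul _)).integrableOn
    have := integral_Iic_of_hasDerivAt_of_tendsto' hderiv hint htend
    simpa using this
  -- FTC on the right half-line
  have hFTC_r : ∫ x in Ioi a, (-(c*c) * u' x + c * v' x) = -(c * g a) := by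
    have hderiv : ∀ x ∈ Ici a, HasDerivAt (fun x => c * Real.exp (c*(a-x)) * g x)
        (-(c*c) * u' x + c * v' x) x := by
      intro x _
      have h1 : HasDerivAt (fun y : ℝ => c*(a-y)) (-c) x := by
        simpa using ((hasDerivAt_id x).const_sub a).const_mul c
      have hE : HasDerivAt (fun x : ℝ => c * Real.exp (c*(a-x)))
          (c * (Real.exp (c*(a-x)) * -c)) x := (h1.exp).const_mul c
      have := hE.mul (hgd x).hasDerivAt
      refine this.congr_deriv ?_
      simp only [hu'_def, hv'_def]
      ring
    have htend : Tendsto (fun x => c * Real.exp (c*(a-x)) * g x) atTop (𝓝 0) := by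
      refine Tendsto.congr' ?_ tendsto_const_nhds
      filter_upwards [hg_top] with x hx
      simp [hx]
    have hint : IntegrableOn (fun x => -(c*c) * u' x + c * v' x) (Ioi a) :=
      ((hu'_int.const_mul _).add (hv'_int.const_mul _)).integrableOn
    have := integral_Ioi_of_hasDerivAt_of_tendsto' hderiv hint htend
    simpa using this
  -- split FTC identities into separate integrals
  have hL : (c*c) * (∫ x in Iio a, u x) + c * (∫ x in Iio a, v x) = c * g a := by
    rw [← integral_const_mul, ← integral_const_mul, ← integral_add
      ((hu_int.const_mul _).integrableOn) ((hv_int.const_mul _).integrableOn),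
      ← integral_Iic_eq_integral_Iio]
    exact hFTC_l
  have hR : -(c*c) * (∫ x in Ioi a, u' x) + c * (∫ x in Ioi a, v' x) = -(c * g a) := by
    rw [← integral_const_mul, ← integral_const_mul, ← integral_add
      ((hu'_int.const_mul _).integrableOn) ((hv'_int.const_mul _).integrableOn)]
    exact hFTC_r
  -- express the target integrals in terms of u, v, u', v'
  have hA : ∫ x in Iio a, f' x * deriv g x = c * ∫ x in Iio a, v x := by
    rw [← integral_const_mul]
    refine setIntegral_congr_fun measurableSet_Iio fun x hx => ?_
    rw [hf'_lt x hx]; simp only [hv_def]; ring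
  have hB : ∫ x in Ioi a, f' x * deriv g x = c * ∫ x in Ioi a, v' x := by
    rw [← integral_const_mul]
    refine setIntegral_congr_fun measurableSet_Ioi fun x hx => ?_
    rw [hf'_gt x hx]; simp only [hv'_def]; ring
  have hP : ∫ x in Iio a, f x * g x = ∫ x in Iio a, u x :=
    setIntegral_congr_fun measurableSet_Iio fun x hx => by
      rw [hf_lt x hx]
  have hQ : ∫ x in Ioi a, f x * g x = -∫ x in Ioi a, u' x := by
    rw [← integral_neg]
    refine setIntegral_congr_fun measurableSet_Ioi fun x hx => ?_
    rw [hf_gt x hx]; simp only [hu'_def]; ring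
  -- integrability of the target integrands on each half-line
  have hfg_l : IntegrableOn (fun x => f' x * deriv g x) (Iio a) :=
    ((hv_int.const_mul c).integrableOn).congr_fun
      (fun x hx => by rw [hf'_lt x hx]; simp only [hv_def]; ring) measurableSet_Iio
  have hfg_r : IntegrableOn (fun x => f' x * deriv g x) (Ioi a) :=
    ((hv'_int.const_mul c).integrableOn).congr_fun
      (fun x hx => by rw [hf'_gt x hx]; simp only [hv'_def]; ring) measurableSet_Ioi
  have hfg2_l : IntegrableOn (fun x => f x * g x) (Iio a) :=
    (hu_int.integrableOn).congr_fun (fun x hx => (hf_lt x hx ▸ rfl)) measurableSet_Iio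
  have hfg2_r : IntegrableOn (fun x => f x * g x) (Ioi a) :=
    ((hu'_int.neg).integrableOn).congr_fun
      (fun x hx => by rw [hf_gt x hx]; simp only [hu'_def, Pi.neg_apply]; ring) measurableSet_Ioi
  -- split the two target integrals
  have hsplit1 : ∫ x in ({a} : Set ℝ)ᶜ, f' x * deriv g x =
      (∫ x in Iio a, f' x * deriv g x) + ∫ x in Ioi a, f' x * deriv g x := by
    rw [← Set.Iio_union_Ioi]
    exact setIntegral_union (Set.disjoint_left.mpr fun x hx hx' => lt_asymm (show x < a from hx) (show a < x from hx'))
      measurableSet_Ioi hfg_l hfg_r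
  have hsplit2 : ∫ x : ℝ, f x * g x =
      (∫ x in Iio a, f x * g x) + ∫ x in Ioi a, f x * g x := by
    have h0 : ∫ x : ℝ, f x * g x = ∫ x in ({a} : Set ℝ)ᶜ, f x * g x := by
      rw [restrict_compl_singleton]
    rw [h0, ← Set.Iio_union_Ioi]
    exact setIntegral_union (Set.disjoint_left.mpr fun x hx hx' => lt_asymm (show x < a from hx) (show a < x from hx'))
      measurableSet_Ioi hfg2_l hfg2_r
  rw [hsplit1, hsplit2, hA, hB, hP, hQ]
  rw [hc2] at hL hR
  linarith [hL, hR]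
end
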